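/- Let m ≥ 1, t ∈ ℝ, ξ ∈ 𝕊^{2m+1}, and let φ(z) = |cosh t + sinh t (z·ξ̄)|² on 𝕊^{2m+1}. Then for every z ∈ 𝕊^{2m+1}: 1/2 + (1/2)φ(z) + φ(z)^{−1}|∂φ|²(z) + i·Tφ(z) = cosh t · (cosh t + sinh t · conj(z·ξ̄)). In particular the quantity g = 1/2 + φ/2 + φ^{−1}|∂φ|² + iφ_0 factors as cosh t (cosh t + sinh t conj(z·ξ̄)). -/

import Mathlib

noncomputable section

/-- The hermitian pairing `z·ξ̄ = Σ_j z_j conj(ξ_j)` on `ℂ^{m+1}`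
(note Mathlib's `inner` is conjugate-linear in the first slot). -/
def hprod {m : ℕ} (z ξ : EuclideanSpace ℂ (Fin (m+1))) : ℂ := inner ℂ ξ z

/-- The degree-zero homogeneous extension of a function on the unit sphere
`𝕊^{2m+1} ⊂ ℂ^{m+1}`: `F̃(y) = F(y/‖y‖)`. -/
def sphExtC {m : ℕ} (F : EuclideanSpace ℂ (Fin (m+1)) → ℝ)
    (y : EuclideanSpace ℂ (Fin (m+1))) : ℝ :=
  F (‖y‖⁻¹ • y)

/-- Second directional derivative of `F` at `x` in direction `v`. -/
def dir2 {V : Type*} [NormedAddCommGroup V] [NormedSpace ℝ V]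
    (F : V → ℝ) (x v : V) : ℝ :=
  fderiv ℝ (fun y => fderiv ℝ F y v) x v

/-- The Euclidean Laplacian on `ℂ^{m+1} ≅ ℝ^{2m+2}`, computed in the real orthonormal
basis `{e_j, i·e_j}`. -/
def lapC {m : ℕ} (F : EuclideanSpace ℂ (Fin (m+1)) → ℝ)
    (z : EuclideanSpace ℂ (Fin (m+1))) : ℝ :=
  ∑ j : Fin (m+1),
    (dir2 F z (EuclideanSpace.single j 1) + dir2 F z (EuclideanSpace.single j Complex.I))

/-- The Reeb derivative `TF(z) = d/ds|_{s=0} F(e^{is/2} z)` for the canonical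
pseudohermitian structure on `𝕊^{2m+1}`. -/
def reeb {m : ℕ} (F : EuclideanSpace ℂ (Fin (m+1)) → ℝ)
    (z : EuclideanSpace ℂ (Fin (m+1))) : ℝ :=
  deriv (fun s : ℝ => F (Complex.exp (Complex.I * s / 2) • z)) 0

/-- The CR sub-Laplacian of `(𝕊^{2m+1}, θ_c)`:
`Δ_b F(z) = (1/4) Δ_{ℝ^{2m+2}} F̃(z) − T(TF)(z)`. -/
def subLapC {m : ℕ} (F : EuclideanSpace ℂ (Fin (m+1)) → ℝ)
    (z : EuclideanSpace ℂ (Fin (m+1))) : ℝ :=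
  (1 / 4) * lapC (sphExtC F) z - reeb (reeb (sphExtC F)) z

/-- Orthogonal projection onto the holomorphic tangent (horizontal) space
`H_z = {w : Σ_j w_j conj(z_j) = 0}` at a point `z` of the unit sphere. -/
def projH {m : ℕ} (z w : EuclideanSpace ℂ (Fin (m+1))) : EuclideanSpace ℂ (Fin (m+1)) :=
  w - (inner ℂ z w : ℂ) • z

/-- `|∂F|²(z) = (1/8)|P_{H_z}(∇F̃(z))|²`, the squared norm of `∂_b F` with respect to the
canonical pseudohermitian structure `θ_c`. -/
def delbSq {m : ℕ} (F : EuclideanSpace ℂ (Fin (m+1)) → ℝ)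
    (z : EuclideanSpace ℂ (Fin (m+1))) : ℝ :=
  (1 / 8) * ‖projH z (gradient (sphExtC F) z)‖ ^ 2

/-!
For `φ(y) = |b + k ⟪ξ, y⟫|²` on `ℂ^{m+1}` the ambient gradient at `z` is `2 k̄ a ξ` with
`a = b + k ⟪ξ, z⟫`. Extending by degree-zero homogeneity changes the gradient on the sphere only
by a multiple of `z`, which the projection onto `H_z` kills, and the Reeb derivative is the
pairing of the gradient with `i z / 2`. With `w = ⟪ξ, z⟫` this gives
`|∂φ|² = |k|² |a|² (1 - |w|²) / 2` and `Tφ = -Im (k b̄ w)`; for `b = cosh t`, `k = sinh t` the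
claimed factorization is then the identity `cosh² t - sinh² t = 1`.
-/

open InnerProductSpace
open scoped RealInnerProductSpace

section Normalize

variable {F : Type*} [NormedAddCommGroup F] [InnerProductSpace ℝ F]

theorem hasFDerivAt_norm_of_ne_zero {x : F} (hx : x ≠ 0) :
    HasFDerivAt (fun y : F => ‖y‖) (‖x‖⁻¹ • innerSL ℝ x) x := by
  have h := (Real.hasDerivAt_sqrt (by positivity : ‖x‖ ^ 2 ≠ 0)).comp_hasFDerivAt x
    (hasStrictFDerivAt_norm_sq x).hasFDerivAt
  simp only [Function.comp_def, Real.sqrt_sq (norm_nonneg _)] at h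
  refine h.congr_fderiv ?_
  ext v
  simp [field]

theorem hasFDerivAt_normalize {z : F} (hz : ‖z‖ = 1) :
    HasFDerivAt (fun y : F => ‖y‖⁻¹ • y)
      (ContinuousLinearMap.id ℝ F - (innerSL ℝ z).smulRight z) z := by
  have hz0 : z ≠ 0 := norm_ne_zero_iff.mp (by simp [hz])
  have h : HasFDerivAt (fun y : F => ‖y‖⁻¹ • y) _ z :=
    ((hasDerivAt_inv (by simp [hz])).comp_hasFDerivAt z
      (hasFDerivAt_norm_of_ne_zero hz0)).smul (hasFDerivAt_id z)
  refine h.congr_fderiv ?_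
  ext v
  simp [hz, sub_eq_add_neg]

theorem HasGradientAt.comp_normalize [CompleteSpace F] {f : F → ℝ} {g z : F}
    (hf : HasGradientAt f g z) (hz : ‖z‖ = 1) :
    HasGradientAt (fun y => f (‖y‖⁻¹ • y)) (g - ⟪z, g⟫ • z) z := by
  have hfz : HasFDerivAt f (toDual ℝ F g) (‖z‖⁻¹ • z) := by
    simpa [hz] using hf.hasFDerivAt
  rw [hasGradientAt_iff_hasFDerivAt]
  refine (hfz.comp (f := fun y : F => ‖y‖⁻¹ • y) z (hasFDerivAt_normalize hz)).congr_fderiv ?_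
  ext v
  show ⟪g, v - ⟪z, v⟫ • z⟫ = ⟪g - ⟪z, g⟫ • z, v⟫
  rw [inner_sub_left, inner_sub_right, real_inner_smul_left, real_inner_smul_right,
    real_inner_comm z g]
  ring

end Normalize

theorem EuclideanSpace.real_inner_eq_re_inner {ι : Type*} [Fintype ι]
    (x y : EuclideanSpace ℂ ι) :
    ⟪x, y⟫ = (inner ℂ x y).re := by
  simp [PiLp.inner_apply, Complex.re_sum, Complex.inner]

theorem hasGradientAt_norm_add_mul_inner_sq {ι : Type*} [Fintype ι] (b k : ℂ)
    (ξ z : EuclideanSpace ℂ ι) :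
    HasGradientAt (fun y => ‖b + k * inner ℂ ξ y‖ ^ 2)
      ((2 * (starRingEnd ℂ k * (b + k * inner ℂ ξ z))) • ξ) z := by
  have h := ((((innerSL ℂ ξ).restrictScalars ℝ).hasFDerivAt (x := z)).const_mul k).const_add b
  rw [hasGradientAt_iff_hasFDerivAt]
  refine h.norm_sq.congr_fderiv ?_
  ext v
  show (2 : ℕ) • ⟪b + k * inner ℂ ξ z, k * inner ℂ ξ v⟫
    = ⟪(2 * (starRingEnd ℂ k * (b + k * inner ℂ ξ z))) • ξ, v⟫
  rw [EuclideanSpace.real_inner_eq_re_inner, inner_smul_left, Complex.inner]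
  simp only [map_mul, map_ofNat, Complex.conj_conj, Complex.mul_re, Complex.mul_im,
    Complex.re_ofNat, Complex.im_ofNat, Complex.conj_re, Complex.conj_im]
  ring

section Sphere

variable {m : ℕ}

theorem reeb_eq_of_hasGradientAt {F : EuclideanSpace ℂ (Fin (m+1)) → ℝ}
    {g z : EuclideanSpace ℂ (Fin (m+1))} (hF : HasGradientAt F g z) :
    reeb F z = -(inner ℂ g z).im / 2 := by
  have hγ : HasDerivAt (fun s : ℝ => Complex.exp (Complex.I * s / 2) • z)
      ((Complex.I / 2) • z) 0 := by
    have h : HasDerivAt (fun s : ℝ => Complex.I * (s : ℂ) / 2) (Complex.I / 2) 0 := by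
      simpa using (Complex.ofRealCLM.hasDerivAt.const_mul Complex.I).div_const 2
    simpa using h.cexp.smul_const z
  have hFz : HasFDerivAt F (toDual ℝ _ g) (Complex.exp (Complex.I * (0 : ℝ) / 2) • z) := by
    simpa using hF.hasFDerivAt
  have h : HasDerivAt (fun s : ℝ => F (Complex.exp (Complex.I * s / 2) • z))
      (toDual ℝ _ g ((Complex.I / 2) • z)) 0 := hFz.comp_hasDerivAt 0 hγ
  rw [reeb, h.deriv, toDual_apply_apply,
    EuclideanSpace.real_inner_eq_re_inner, inner_smul_right]
  simp only [Complex.mul_re, Complex.div_ofNat_re, Complex.div_ofNat_im, Complex.I_re,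
    Complex.I_im]
  ring

theorem projH_sub_smul_self {z : EuclideanSpace ℂ (Fin (m+1))} (hz : ‖z‖ = 1)
    (w : EuclideanSpace ℂ (Fin (m+1))) (r : ℂ) : projH z (w - r • z) = projH z w := by
  have hzz : inner ℂ z z = (1 : ℂ) := by simp [hz]
  simp only [projH, inner_sub_right, inner_smul_right, hzz]
  module

theorem norm_projH_sq {z : EuclideanSpace ℂ (Fin (m+1))} (hz : ‖z‖ = 1)
    (w : EuclideanSpace ℂ (Fin (m+1))) : ‖projH z w‖ ^ 2 = ‖w‖ ^ 2 - ‖inner ℂ z w‖ ^ 2 := by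
  rw [projH, @norm_sub_sq ℂ, norm_smul, hz, inner_smul_right, ← inner_conj_symm w z,
    RCLike.mul_conj]
  simp only [Complex.coe_algebraMap, ← Complex.ofReal_pow, RCLike.re_to_complex,
    Complex.ofReal_re, mul_one]
  ring

theorem delbSq_eq_of_hasGradientAt {F : EuclideanSpace ℂ (Fin (m+1)) → ℝ}
    {g z : EuclideanSpace ℂ (Fin (m+1))} (hF : HasGradientAt F g z) (hz : ‖z‖ = 1) :
    delbSq F z = (‖g‖ ^ 2 - ‖inner ℂ z g‖ ^ 2) / 8 := by
  have h : HasGradientAt (sphExtC F) _ z := hF.comp_normalize hz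
  rw [delbSq, h.gradient, RCLike.real_smul_eq_coe_smul (K := ℂ), projH_sub_smul_self hz,
    norm_projH_sq hz]
  ring

theorem delbSq_norm_add_mul_inner_sq (b k : ℂ) {ξ z : EuclideanSpace ℂ (Fin (m+1))}
    (hξ : ‖ξ‖ = 1) (hz : ‖z‖ = 1) :
    delbSq (fun y => ‖b + k * inner ℂ ξ y‖ ^ 2) z
      = ‖b + k * inner ℂ ξ z‖ ^ 2 * (‖k‖ ^ 2 * (1 - ‖inner ℂ ξ z‖ ^ 2) / 2) := by
  rw [delbSq_eq_of_hasGradientAt (hasGradientAt_norm_add_mul_inner_sq b k ξ z) hz,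
    inner_smul_right, norm_smul, hξ, ← inner_conj_symm]
  simp only [norm_mul, Complex.norm_conj, Complex.norm_ofNat]
  ring

theorem reeb_norm_add_mul_inner_sq (b k : ℂ) (ξ z : EuclideanSpace ℂ (Fin (m+1))) :
    reeb (fun y => ‖b + k * inner ℂ ξ y‖ ^ 2) z = -(k * starRingEnd ℂ b * inner ℂ ξ z).im := by
  rw [reeb_eq_of_hasGradientAt (hasGradientAt_norm_add_mul_inner_sq b k ξ z), inner_smul_left]
  simp only [map_mul, map_add, map_ofNat, Complex.conj_conj, Complex.mul_im, Complex.mul_re,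
    Complex.add_re, Complex.add_im, Complex.conj_re, Complex.conj_im, Complex.re_ofNat,
    Complex.im_ofNat]
  ring

end Sphere

theorem cosh_add_sinh_mul_ne_zero (t : ℝ) {w : ℂ} (hw : ‖w‖ ≤ 1) :
    (Real.cosh t : ℂ) + Real.sinh t * w ≠ 0 := by
  intro h
  have hnorm : ‖(Real.cosh t : ℂ)‖ = ‖(Real.sinh t : ℂ) * w‖ := by
    rw [eq_neg_of_add_eq_zero_left h, norm_neg]
  have hlt : |Real.sinh t| < Real.cosh t := by
    rw [Real.abs_sinh, ← Real.cosh_abs]; exact Real.sinh_lt_cosh _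
  rw [norm_mul, Complex.norm_real, Complex.norm_real, Real.norm_of_nonneg (Real.cosh_pos t).le,
    Real.norm_eq_abs] at hnorm
  nlinarith [abs_nonneg (Real.sinh t)]

theorem factorization_of_sq_sub_sq_eq_one {c s : ℝ} (hcs : c ^ 2 - s ^ 2 = 1) {w : ℂ}
    (ha : (c : ℂ) + s * w ≠ 0) :
    ((1 / 2 + ‖(c : ℂ) + s * w‖ ^ 2 / 2 + (‖(c : ℂ) + s * w‖ ^ 2)⁻¹
        * (‖(c : ℂ) + s * w‖ ^ 2 * (‖(s : ℂ)‖ ^ 2 * (1 - ‖w‖ ^ 2) / 2)) : ℝ) : ℂ)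
      + Complex.I * ((-((s : ℂ) * starRingEnd ℂ (c : ℂ) * w).im : ℝ) : ℂ)
      = c * (c + s * starRingEnd ℂ w) := by
  have hna : ‖(c : ℂ) + s * w‖ ^ 2 ≠ 0 := by positivity
  rw [inv_mul_cancel_left₀ hna]
  apply Complex.ext
  · simp only [Complex.sq_norm, Complex.normSq_apply, Complex.add_re, Complex.add_im,
      Complex.mul_re, Complex.mul_im, Complex.ofReal_re, Complex.ofReal_im, Complex.I_re,
      Complex.I_im, Complex.conj_re, Complex.conj_im]
    linear_combination (-1 / 2 : ℝ) * hcs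
  · simp only [Complex.add_im, Complex.mul_im, Complex.mul_re, Complex.ofReal_re,
      Complex.ofReal_im, Complex.I_re, Complex.I_im, Complex.conj_re, Complex.conj_im]
    ring

theorem stmt14_general (m : ℕ) (t : ℝ)
    (ξ : EuclideanSpace ℂ (Fin (m+1))) (hξ : ‖ξ‖ = 1)
    (φ : EuclideanSpace ℂ (Fin (m+1)) → ℝ)
    (hφ : ∀ z, φ z = ‖(Real.cosh t : ℂ) + (Real.sinh t : ℂ) * hprod z ξ‖ ^ 2) :
    ∀ z : EuclideanSpace ℂ (Fin (m+1)), ‖z‖ = 1 →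
      ((1 / 2 + φ z / 2 + (φ z)⁻¹ * delbSq φ z : ℝ) : ℂ) + Complex.I * (reeb φ z : ℝ)
        = (Real.cosh t : ℂ) *
            ((Real.cosh t : ℂ) + (Real.sinh t : ℂ) * (starRingEnd ℂ) (hprod z ξ)) := by
  intro z hz
  have hφ' : φ = fun y => ‖(Real.cosh t : ℂ) + Real.sinh t * inner ℂ ξ y‖ ^ 2 := funext hφ
  have hw : ‖hprod z ξ‖ ≤ 1 :=
    (norm_inner_le_norm (𝕜 := ℂ) ξ z).trans_eq (by rw [hξ, hz, one_mul])
  have ha := cosh_add_sinh_mul_ne_zero t hw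
  rw [hφ', delbSq_norm_add_mul_inner_sq _ _ hξ hz, reeb_norm_add_mul_inner_sq]
  exact factorization_of_sq_sub_sq_eq_one (Real.cosh_sq_sub_sinh_sq t) ha

/-- for `m ≥ 1`, `t ∈ ℝ`, `ξ ∈ 𝕊^{2m+1}` and
`φ(z) = |cosh t + sinh t (z·ξ̄)|²`, one has, at every `z ∈ 𝕊^{2m+1}`, the factorization
`1/2 + φ/2 + φ⁻¹|∂φ|² + i φ_0 = cosh t (cosh t + sinh t conj(z·ξ̄))` of the quantity `g`. -/
theorem stmt14 (m : ℕ) (hm : 1 ≤ m) (t : ℝ)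
    (ξ : EuclideanSpace ℂ (Fin (m+1))) (hξ : ‖ξ‖ = 1)
    (φ : EuclideanSpace ℂ (Fin (m+1)) → ℝ)
    (hφ : ∀ z, φ z = ‖(Real.cosh t : ℂ) + (Real.sinh t : ℂ) * hprod z ξ‖ ^ 2) :
    ∀ z : EuclideanSpace ℂ (Fin (m+1)), ‖z‖ = 1 →
      ((1 / 2 + φ z / 2 + (φ z)⁻¹ * delbSq φ z : ℝ) : ℂ) + Complex.I * (reeb φ z : ℝ)
        = (Real.cosh t : ℂ) *
            ((Real.cosh t : ℂ) + (Real.sinh t : ℂ) * (starRingEnd ℂ) (hprod z ξ)) :=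
  stmt14_general m t ξ hξ φ hφ
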